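/- arXiv:math/0208048 — 2 statements merged into one kernel-verified Lean document; each statement's English description precedes it below -/
import Mathlib

section
/- If φ is a root of (h, g) whose restriction to h_r is neither zero nor an h_r-weight of p, then the root vector e_φ lies in r and φ vanishes on h_p. -/
/-!
Split `e = e_p + e_r` along `g = p ⊕ r`. Since `[r, p] ⊆ p`, the projection onto `p` commutes
with `ad x` for `x ∈ r`, so `e_p` is an `h_r`-weight vector of weight `φ|h_r` in `p`; by hypothesis
it vanishes, i.e. `e ∈ r`. Then for `y ∈ h ∩ p` the vector `φ y • e = -⁅e, y⁆` lies in `r ∩ p = 0`.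
-/

/-- A Lie algebra is reductive if its radical coincides with its center. -/
def LieAlgebra.IsReductive' (R L : Type*) [CommRing R] [LieRing L] [LieAlgebra R L] : Prop :=
  LieAlgebra.radical R L = LieAlgebra.center R L

namespace LieSubalgebra

open Submodule

section CommRing

variable {R L : Type*} [CommRing R] [LieRing L] [LieAlgebra R L]
  {r : LieSubalgebra R L} {p : Submodule R L}

theorem map_incl_le (K : LieSubalgebra R r) : K.map r.incl ≤ r := by
  rintro _ ⟨y, -, rfl⟩
  exact y.2

theorem projection_lie_of_mem (hcompl : IsCompl p r.toSubmodule)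
    (hbr : ∀ x ∈ r, ∀ y ∈ p, ⁅x, y⁆ ∈ p) {x : L} (hx : x ∈ r) (v : L) :
    p.projection r.toSubmodule hcompl ⁅x, v⁆ = ⁅x, p.projection r.toSubmodule hcompl v⁆ := by
  conv_lhs => rw [← projection_add_projection_eq_self hcompl v]
  rw [lie_add, map_add,
    projection_apply_of_mem_left hcompl (hbr x hx _ (projection_apply_mem _ _)),
    projection_apply_of_mem_right hcompl (r.lie_mem hx (projection_apply_mem _ _)), add_zero]

theorem lie_projection_eq_smul (hcompl : IsCompl p r.toSubmodule)
    (hbr : ∀ x ∈ r, ∀ y ∈ p, ⁅x, y⁆ ∈ p) {x v : L} {c : R} (hx : x ∈ r) (hv : ⁅x, v⁆ = c • v) :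
    ⁅x, p.projection r.toSubmodule hcompl v⁆ = c • p.projection r.toSubmodule hcompl v := by
  rw [← projection_lie_of_mem hcompl hbr hx, hv, map_smul]

end CommRing

theorem eq_zero_of_lie_eq_smul_of_mem {K L : Type*} [Field K] [LieRing L] [LieAlgebra K L]
    {r : LieSubalgebra K L} {p : Submodule K L} (hdisj : Disjoint r.toSubmodule p)
    (hbr : ∀ x ∈ r, ∀ y ∈ p, ⁅x, y⁆ ∈ p) {e y : L} {c : K} (he : e ∈ r) (he0 : e ≠ 0)
    (hy : y ∈ p) (h : ⁅y, e⁆ = c • e) : c = 0 := by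
  have hr : c • e ∈ r.toSubmodule := r.toSubmodule.smul_mem c he
  have hp : c • e ∈ p := by
    rw [← h, ← lie_skew]
    exact p.neg_mem (hbr e he y hy)
  exact (smul_eq_zero.mp (disjoint_def.mp hdisj _ hr hp)).resolve_right he0

end LieSubalgebra

theorem stmt9_general (g : Type*) [LieRing g] [LieAlgebra ℂ g]
    (r : LieSubalgebra ℂ g)
    (p : Submodule ℂ g)
    (hcompl : IsCompl r.toSubmodule p)
    (hbr : ∀ x ∈ r, ∀ y ∈ p, ⁅x, y⁆ ∈ p)
    -- compatible Cartan subalgebras `h_r ⊆ h` and `h_p = h ∩ p`: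
    (hr' : LieSubalgebra ℂ r)
    (hr : LieSubalgebra ℂ g) (hhr : hr = hr'.map r.incl)
    (h : LieSubalgebra ℂ g) (hrh : hr ≤ h)
    (hpsub : Submodule ℂ g) (hhp : hpsub = h.toSubmodule ⊓ p)
    -- a root `φ` of `(h, g)` with root vector `e`:
    (φ : Module.Dual ℂ g) (e : g) (he : e ≠ 0)
    (hroot : ∀ z ∈ h, ⁅z, e⁆ = φ z • e)
    -- `φ|h_r` is not an `h_r`-weight of `p`:
    (hφΓ : ¬ ∃ w ∈ p, w ≠ 0 ∧ ∀ x ∈ hr, ⁅x, w⁆ = φ x • w) :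
    e ∈ r ∧ ∀ y ∈ hpsub, φ y = 0 := by
  have hhr_le : hr ≤ r := hhr ▸ LieSubalgebra.map_incl_le hr'
  have hep : p.projection r.toSubmodule hcompl.symm e = 0 := by
    by_contra hne
    exact hφΓ ⟨_, Submodule.projection_apply_mem _ _, hne, fun x hx =>
      LieSubalgebra.lie_projection_eq_smul hcompl.symm hbr (hhr_le hx) (hroot x (hrh hx))⟩
  have heR : e ∈ r := (Submodule.projection_apply_eq_zero_iff _).mp hep
  refine ⟨heR, fun y hy => ?_⟩
  rw [hhp] at hy
  exact LieSubalgebra.eq_zero_of_lie_eq_smul_of_mem hcompl.disjoint hbr heR he hy.2 (hroot y hy.1)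

/-- If `φ` is a root of `(h, g)` whose restriction to `h_r` is neither
zero nor an `h_r`-weight of `p`, then the root vector `e_φ` lies in `r` and `φ`
vanishes on `h_p`. -/
theorem stmt9 (g : Type*) [LieRing g] [LieAlgebra ℂ g] [Module.Finite ℂ g]
    [LieAlgebra.IsSemisimple ℂ g]
    (B : LinearMap.BilinForm ℂ g) (hBsymm : B.IsSymm)
    (hBinv : ∀ x y z : g, B ⁅x, y⁆ z = B x ⁅y, z⁆)
    (hBnd : B.Nondegenerate)
    (r : LieSubalgebra ℂ g) (hred : LieAlgebra.IsReductive' ℂ r)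
    (hBr : (B.restrict r.toSubmodule).Nondegenerate)
    (p : Submodule ℂ g) (hp : p = B.orthogonal r.toSubmodule)
    (hcompl : IsCompl r.toSubmodule p)
    (hbr : ∀ x ∈ r, ∀ y ∈ p, ⁅x, y⁆ ∈ p)
    -- compatible Cartan subalgebras `h_r ⊆ h` and `h_p = h ∩ p`:
    (hr' : LieSubalgebra ℂ r) (hhr' : hr'.IsCartanSubalgebra)
    (hr : LieSubalgebra ℂ g) (hhr : hr = hr'.map r.incl)
    (h : LieSubalgebra ℂ g) (hh : h.IsCartanSubalgebra) (hrh : hr ≤ h)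
    (hpsub : Submodule ℂ g) (hhp : hpsub = h.toSubmodule ⊓ p)
    -- a root `φ` of `(h, g)` with root vector `e`:
    (φ : Module.Dual ℂ g) (e : g) (he : e ≠ 0)
    (hroot : ∀ z ∈ h, ⁅z, e⁆ = φ z • e) (hφ0 : ∃ z ∈ h, φ z ≠ 0)
    -- `φ|h_r` is nonzero:
    (hφhr : ∃ x ∈ hr, φ x ≠ 0)
    -- `φ|h_r` is not an `h_r`-weight of `p`:
    (hφΓ : ¬ ∃ w ∈ p, w ≠ 0 ∧ ∀ x ∈ hr, ⁅x, w⁆ = φ x • w) :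
    e ∈ r ∧ ∀ y ∈ hpsub, φ y = 0 :=
  stmt9_general g r p hcompl hbr hr' hr hhr h hrh hpsub hhp φ e he hroot hφΓ
end

section
/- The cubic element v ∈ ∧³p defined by B([x,x'],x'') = −2 B_{C(p)}(v, x∧x'∧x'') for all x,x',x'' ∈ p commutes (in the Clifford algebra) with ν_*(x) for every x ∈ h_r; hence each h_r-weight space of L = C(p)u is stable under left Clifford multiplication by v. -/
noncomputable instance : Invertible (2 : ℂ) := invertibleOfNonzero two_ne_zero

open CliffordAlgebra

namespace LinearMap.BilinForm

theorem lieInvariant_of_apply_lie {R L : Type*} [CommRing R] [LieRing L] [LieAlgebra R L]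
    {B : LinearMap.BilinForm R L} (hB : ∀ x y z : L, B ⁅x, y⁆ z = B x ⁅y, z⁆) :
    B.lieInvariant L := fun x y z => by
  rw [← lie_skew, map_neg, LinearMap.neg_apply, hB]

theorem lieInvariant.apply_lie_lie_add_eq_zero {R L : Type*} [CommRing R] [LieRing L]
    [LieAlgebra R L] {B : LinearMap.BilinForm R L} (hB : B.lieInvariant L) (x a b c : L) :
    B ⁅⁅x, a⁆, b⁆ c + B ⁅a, ⁅x, b⁆⁆ c + B ⁅a, b⁆ ⁅x, c⁆ = 0 := by
  rw [← LinearMap.add_apply, ← map_add, ← leibniz_lie, hB, neg_add_cancel]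

theorem restrict_orthogonal_nondegenerate {K V : Type*} [Field K] [AddCommGroup V] [Module K V]
    [FiniteDimensional K V] {B : LinearMap.BilinForm K V} (hB : B.Nondegenerate) (hB₀ : B.IsRefl)
    {W : Submodule K V} (hW : (B.restrict W).Nondegenerate) :
    (B.restrict (B.orthogonal W)).Nondegenerate := by
  refine B.nondegenerate_restrict_of_disjoint_orthogonal hB₀ ?_
  rw [orthogonal_orthogonal hB hB₀]
  exact (isCompl_orthogonal_of_restrict_nondegenerate hB₀ hW).disjoint.symm

end LinearMap.BilinForm

namespace ExteriorAlgebra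

variable {R M : Type*} [CommRing R] [AddCommGroup M] [Module R M]

theorem ιMulti_three (v : Fin 3 → M) : ιMulti R 3 v = ι R (v 0) * ι R (v 1) * ι R (v 2) := by
  simp [ιMulti_apply, mul_assoc, Matrix.vecTail]

theorem span_ι_mul_ι_mul_ι :
    Submodule.span R (Set.range fun v : Fin 3 → M => ι R (v 0) * ι R (v 1) * ι R (v 2)) =
      ⋀[R]^3 M := by
  simp_rw [← ιMulti_three, ← ιMulti_span_fixedDegree]

theorem ιMulti_three_apply_ιMulti_three {Bv : LinearMap.BilinForm R M}
    {Bc : LinearMap.BilinForm R (ExteriorAlgebra R M)}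
    (hBc : ∀ a b c a' b' c' : M,
      Bc (ι R a * ι R b * ι R c) (ι R a' * ι R b' * ι R c') =
        Matrix.det !![Bv a a', Bv a b', Bv a c'; Bv b a', Bv b b', Bv b c';
          Bv c a', Bv c b', Bv c c'])
    (v d : Fin 3 → M) :
    Bc (ιMulti R 3 v) (ιMulti R 3 d) = (Matrix.of fun i j => Bv (v i) (d j)).det := by
  rw [ιMulti_three, ιMulti_three, hBc]
  congr 1
  ext i j
  fin_cases i <;> fin_cases j <;> rfl

end ExteriorAlgebra

namespace exteriorPower

theorem eq_zero_of_forall_pairingDual_ιMulti_eq_zero {R M : Type*} [CommRing R] [AddCommGroup M]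
    [Module R M] [Module.Free R M] {n : ℕ} {w : ⋀[R]^n M}
    (h : ∀ f : Fin n → Module.Dual R M, pairingDual R M n (ιMulti R n f) w = 0) : w = 0 := by
  classical
  let b := Module.Free.chooseBasis R M
  let _ : LinearOrder (Module.Free.ChooseBasisIndex R M) := linearOrderOfSTO WellOrderingRel
  refine (b.exteriorPower n).ext_elem fun s => ?_
  rw [basis_repr_apply, map_zero, Finsupp.zero_apply]
  exact h _

theorem eq_zero_of_forall_apply_ιMulti_eq_zero {K V : Type*} [Field K] [AddCommGroup V]
    [Module K V] [FiniteDimensional K V] {n : ℕ} {Bv : LinearMap.BilinForm K V}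
    (hBv : Bv.Nondegenerate) {Bc : LinearMap.BilinForm K (ExteriorAlgebra K V)}
    (hBc : ∀ v d : Fin n → V,
      Bc (ExteriorAlgebra.ιMulti K n v) (ExteriorAlgebra.ιMulti K n d) =
        (Matrix.of fun i j => Bv (v i) (d j)).det)
    {w : ExteriorAlgebra K V} (hw : w ∈ ⋀[K]^n V)
    (h : ∀ d : Fin n → V, Bc w (ExteriorAlgebra.ιMulti K n d) = 0) : w = 0 := by
  -- `Bv` identifies `V` with its dual, turning the Gram pairing into `pairingDual`.
  let e := Bv.flip.toDual hBv.flip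
  have hpair : ∀ d : Fin n → V, pairingDual K V n (ιMulti K n (e ∘ d)) =
      Bc.flip (ExteriorAlgebra.ιMulti K n d) ∘ₗ (⋀[K]^n V).subtype := fun d =>
    linearMap_ext (AlternatingMap.ext fun v => by simp [hBc, e, LinearMap.BilinForm.toDual_def])
  suffices (⟨w, hw⟩ : ⋀[K]^n V) = 0 from congrArg Subtype.val this
  refine eq_zero_of_forall_pairingDual_ιMulti_eq_zero fun f => ?_
  obtain ⟨d, rfl⟩ : ∃ d, e ∘ d = f := ⟨e.symm ∘ f, by ext1 j; simp⟩
  simpa [hpair] using h d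

end exteriorPower

namespace CliffordAlgebra

section CommRing

variable {R M : Type*} [CommRing R] [Invertible (2 : R)] [AddCommGroup M] [Module R M]
  {Q : QuadraticForm R M}

local notation "ε" => ExteriorAlgebra.ι R

theorem equivExterior_symm_ι_mul_ι_mul_ι (a b c : M) :
    (equivExterior Q).symm (ε a * ε b * ε c) =
      ι Q a * ι Q b * ι Q c - QuadraticMap.associated Q b c • ι Q a +
        QuadraticMap.associated Q a c • ι Q b - QuadraticMap.associated Q a b • ι Q c := by
  have hform : -QuadraticMap.associated (R := R) (-Q) = QuadraticMap.associated Q := by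
    ext
    simp
  have hchange : (equivExterior Q).symm (ε a * ε b * ε c) =
      changeForm (changeForm.neg_proof changeForm.associated_neg_proof) (ε a * (ε b * ε c)) := by
    rw [mul_assoc]
    rfl
  rw [hchange, changeForm_ι_mul, changeForm_ι_mul_ι, hform]
  simp only [map_sub, contractLeft_ι_mul, contractLeft_ι, contractLeft_algebraMap, mul_sub,
    sub_zero, ← Algebra.commutes, ← Algebra.smul_def, mul_assoc]
  abel

def exteriorAd (x : CliffordAlgebra Q) : ExteriorAlgebra R M →ₗ[R] ExteriorAlgebra R M :=
  (equivExterior Q).toLinearMap ∘ₗ (.mulLeft R x - .mulRight R x) ∘ₗ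
    (equivExterior Q).symm.toLinearMap

theorem exteriorAd_apply (x : CliffordAlgebra Q) (w : ExteriorAlgebra R M) :
    exteriorAd x w = equivExterior Q ⁅x, (equivExterior Q).symm w⁆ :=
  rfl

variable {x : CliffordAlgebra Q} {f : Module.End R M}

theorem exteriorAd_ι_mul_ι_mul_ι (hx : ∀ y, ⁅x, ι Q y⁆ = ι Q (f y))
    (hf : ∀ y z, QuadraticMap.associated Q (f y) z = -QuadraticMap.associated Q y (f z))
    (a b c : M) :
    exteriorAd x (ε a * ε b * ε c) =
      ε (f a) * ε b * ε c + ε a * ε (f b) * ε c + ε a * ε b * ε (f c) := by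
  let D : CliffordAlgebra Q →ₗ[R] CliffordAlgebra Q := .mulLeft R x - .mulRight R x
  have hD : ∀ y, ⁅x, y⁆ = D y := fun _ => rfl
  have hD_mul : ∀ y z, D (y * z) = D y * z + y * D z := by
    intro y z
    simp only [D, LinearMap.sub_apply, LinearMap.mulLeft_apply, LinearMap.mulRight_apply]
    noncomm_ring
  simp only [exteriorAd_apply, hD] at hx ⊢
  rw [← LinearEquiv.eq_symm_apply, map_add, map_add]
  simp only [equivExterior_symm_ι_mul_ι_mul_ι, map_sub, map_add, map_smul, hD_mul, hx, hf,
    add_mul]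
  module

theorem exteriorAd_mem_exteriorPower_three (hx : ∀ y, ⁅x, ι Q y⁆ = ι Q (f y))
    (hf : ∀ y z, QuadraticMap.associated Q (f y) z = -QuadraticMap.associated Q y (f z))
    {w : ExteriorAlgebra R M} (hw : w ∈ ⋀[R]^3 M) : exteriorAd x w ∈ ⋀[R]^3 M := by
  rw [← ExteriorAlgebra.span_ι_mul_ι_mul_ι] at hw
  refine (Submodule.span_le (p := (⋀[R]^3 M).comap (exteriorAd x))).2 ?_ hw
  rintro _ ⟨v, rfl⟩
  rw [SetLike.mem_coe, Submodule.mem_comap, exteriorAd_ι_mul_ι_mul_ι hx hf,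
    ← ExteriorAlgebra.span_ι_mul_ι_mul_ι]
  refine add_mem (add_mem ?_ ?_) ?_ <;> exact Submodule.subset_span ⟨![_, _, _], rfl⟩

theorem apply_exteriorAd_ι_mul_ι_mul_ι {Bc : LinearMap.BilinForm R (ExteriorAlgebra R M)}
    (hBc : ∀ v d : Fin 3 → M,
      Bc (ExteriorAlgebra.ιMulti R 3 v) (ExteriorAlgebra.ιMulti R 3 d) =
        (Matrix.of fun i j => QuadraticMap.associated Q (v i) (d j)).det)
    (hx : ∀ y, ⁅x, ι Q y⁆ = ι Q (f y))
    (hf : ∀ y z, QuadraticMap.associated Q (f y) z = -QuadraticMap.associated Q y (f z))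
    {w : ExteriorAlgebra R M} (hw : w ∈ ⋀[R]^3 M) (a b c : M) :
    Bc (exteriorAd x w) (ε a * ε b * ε c) =
      -(Bc w (ε (f a) * ε b * ε c) + Bc w (ε a * ε (f b) * ε c) +
        Bc w (ε a * ε b * ε (f c))) := by
  have hBc3 : ∀ a b c a' b' c' : M, Bc (ε a * ε b * ε c) (ε a' * ε b' * ε c') =
      (Matrix.of fun i j => QuadraticMap.associated Q (![a, b, c] i) (![a', b', c'] j)).det :=
    fun a b c a' b' c' => by
      rw [← hBc, ExteriorAlgebra.ιMulti_three, ExteriorAlgebra.ιMulti_three]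
      rfl
  rw [← ExteriorAlgebra.span_ι_mul_ι_mul_ι] at hw
  induction hw using Submodule.span_induction with
  | mem _ hv =>
    obtain ⟨v, rfl⟩ := hv
    simp only [exteriorAd_ι_mul_ι_mul_ι hx hf, map_add, LinearMap.add_apply, hBc3,
      Matrix.det_fin_three, Matrix.of_apply, Matrix.cons_val_zero, Matrix.cons_val_one,
      Matrix.cons_val_two, Matrix.head_cons, Matrix.tail_cons]
    simp only [hf]
    ring
  | zero => simp
  | add _ _ _ _ hw hw' =>
    simp only [map_add, LinearMap.add_apply, hw, hw']
    ring
  | smul t _ _ hw =>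
    simp only [map_smul, LinearMap.smul_apply, hw, smul_eq_mul]
    ring

end CommRing

section Field

variable {K V : Type*} [Field K] [Invertible (2 : K)] [AddCommGroup V] [Module K V]
  {Q : QuadraticForm K V} {Bc : LinearMap.BilinForm K (ExteriorAlgebra K V)}
  {x : CliffordAlgebra Q} {f : Module.End K V}

local notation "ε" => ExteriorAlgebra.ι K

theorem lie_equivExterior_symm_eq_zero [FiniteDimensional K V]
    (hQ : (QuadraticMap.associated Q).Nondegenerate)
    (hBc : ∀ v d : Fin 3 → V,
      Bc (ExteriorAlgebra.ιMulti K 3 v) (ExteriorAlgebra.ιMulti K 3 d) =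
        (Matrix.of fun i j => QuadraticMap.associated Q (v i) (d j)).det)
    (hx : ∀ y, ⁅x, ι Q y⁆ = ι Q (f y))
    (hf : ∀ y z, QuadraticMap.associated Q (f y) z = -QuadraticMap.associated Q y (f z))
    {w : ExteriorAlgebra K V} (hw : w ∈ ⋀[K]^3 V)
    (φ : V → V → V → K) (hwφ : ∀ a b c, Bc w (ε a * ε b * ε c) = φ a b c)
    (hφ : ∀ a b c, φ (f a) b c + φ a (f b) c + φ a b (f c) = 0) :
    ⁅x, (equivExterior Q).symm w⁆ = 0 := by
  have hperp : ∀ d : Fin 3 → V, Bc (exteriorAd x w) (ExteriorAlgebra.ιMulti K 3 d) = 0 := by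
    intro d
    rw [ExteriorAlgebra.ιMulti_three, apply_exteriorAd_ι_mul_ι_mul_ι hBc hx hf hw, hwφ, hwφ, hwφ,
      hφ, neg_zero]
  have h := exteriorPower.eq_zero_of_forall_apply_ιMulti_eq_zero hQ hBc
    (exteriorAd_mem_exteriorPower_three hx hf hw) hperp
  rwa [exteriorAd_apply, LinearEquiv.map_eq_zero_iff] at h

end Field

end CliffordAlgebra

theorem stmt17_general (g : Type*) [LieRing g] [LieAlgebra ℂ g] [Module.Finite ℂ g]
    (B : LinearMap.BilinForm ℂ g) (hBsymm : B.IsSymm)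
    (hBinv : ∀ x y z : g, B ⁅x, y⁆ z = B x ⁅y, z⁆)
    (hBnd : B.Nondegenerate)
    (r : LieSubalgebra ℂ g)
    (hBr : (B.restrict r.toSubmodule).Nondegenerate)
    (p : Submodule ℂ g) (hp : p = B.orthogonal r.toSubmodule)
    (hbr : ∀ (x : r) (y : p), ⁅(x : g), (y : g)⁆ ∈ p)
    (Q : QuadraticForm ℂ p) (hQ : Q = (B.restrict p).toQuadraticMap)
    (hr : LieSubalgebra ℂ g)
    -- the extension `B_{C(p)}` of `B_p` to the exterior algebra, given on
    -- decomposable degree-3 elements by the Gram determinant: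
    (Bc : LinearMap.BilinForm ℂ (ExteriorAlgebra ℂ p))
    (hBc : ∀ a b c a' b' c' : p,
      Bc (ExteriorAlgebra.ι ℂ a * ExteriorAlgebra.ι ℂ b * ExteriorAlgebra.ι ℂ c)
         (ExteriorAlgebra.ι ℂ a' * ExteriorAlgebra.ι ℂ b' * ExteriorAlgebra.ι ℂ c') =
      Matrix.det !![B (a : g) (a' : g), B (a : g) (b' : g), B (a : g) (c' : g);
                    B (b : g) (a' : g), B (b : g) (b' : g), B (b : g) (c' : g);
                    B (c : g) (a' : g), B (c : g) (b' : g), B (c : g) (c' : g)])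
    -- the cubic element `v ∈ ∧³p`:
    (ve : ExteriorAlgebra ℂ p)
    (hv3 : ve ∈ (LinearMap.range (ExteriorAlgebra.ι ℂ : p →ₗ[ℂ] ExteriorAlgebra ℂ p)) ^ 3)
    (hvdef : ∀ x x' x'' : p,
      B ⁅(x : g), (x' : g)⁆ (x'' : g) = -2 * Bc ve
        (ExteriorAlgebra.ι ℂ x * ExteriorAlgebra.ι ℂ x' * ExteriorAlgebra.ι ℂ x''))
    (v : CliffordAlgebra Q) (hv : v = (equivExterior Q).symm ve)
    -- the spin homomorphism `ν_*`:
    (ν : r →ₗ[ℂ] CliffordAlgebra Q)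
    (hνdef : ∀ (x : r) (y : p), ι Q ⟨⁅(x : g), (y : g)⁆, hbr x y⟩ = ⁅ν x, ι Q y⁆)
    -- `u` and the left ideal `L = C(p)·u`:
    (u : CliffordAlgebra Q) :
    (∀ x : r, (x : g) ∈ hr → v * ν x = ν x * v) ∧
    ∀ (β : Module.Dual ℂ g) (s : CliffordAlgebra Q),
      s ∈ LinearMap.range (LinearMap.mulRight ℂ u) →
      (∀ x : r, (x : g) ∈ hr → ν x * s = β x • s) →
      v * s ∈ LinearMap.range (LinearMap.mulRight ℂ u) ∧
        ∀ x : r, (x : g) ∈ hr → ν x * (v * s) = β x • (v * s) := by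
  have hinv : B.lieInvariant g := LinearMap.BilinForm.lieInvariant_of_apply_lie hBinv
  have hBp : (B.restrict p).Nondegenerate :=
    hp ▸ LinearMap.BilinForm.restrict_orthogonal_nondegenerate hBnd hBsymm.isRefl hBr
  have hassoc : QuadraticMap.associated Q = B.restrict p := by
    rw [hQ]
    exact QuadraticMap.associated_left_inverse _ fun a b => hBsymm.eq a b
  have hcomm : ∀ x : r, v * ν x = ν x * v := by
    intro x
    let f : Module.End ℂ p := (LieAlgebra.ad ℂ g x).restrict fun y hy => hbr x ⟨y, hy⟩
    have hf : ∀ y : p, (f y : g) = ⁅(x : g), (y : g)⁆ := fun _ => rfl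
    have h := lie_equivExterior_symm_eq_zero (hassoc ▸ hBp)
      (hassoc ▸ ExteriorAlgebra.ιMulti_three_apply_ιMulti_three (Bv := B.restrict p) hBc)
      (f := f) (fun y => (hνdef x y).symm) (fun y z => by rw [hassoc]; exact hinv x y z) hv3
      (fun a b c => -2⁻¹ * B ⁅(a : g), (b : g)⁆ c)
      (fun a b c => by linear_combination (2⁻¹ : ℂ) * hvdef a b c)
      (fun a b c => by
        rw [hf, hf, hf]
        linear_combination (-2⁻¹ : ℂ) * hinv.apply_lie_lie_add_eq_zero x a b c)
    rw [Ring.lie_def, sub_eq_zero, ← hv] at h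
    exact h.symm
  refine ⟨fun x _ => hcomm x, ?_⟩
  rintro β _ ⟨t, rfl⟩ hβ
  refine ⟨⟨v * t, mul_assoc v t u⟩, fun x hx => ?_⟩
  rw [← mul_assoc, ← hcomm, mul_assoc, hβ x hx, mul_smul_comm]

/-- The cubic element `v ∈ ∧³p` defined by
`B([x,x'],x'') = -2 B_{C(p)}(v, x∧x'∧x'')` commutes in the Clifford algebra with
`ν_*(x)` for every `x ∈ h_r`; hence every `h_r`-weight space of `L = C(p)u` is
stable under left Clifford multiplication by `v`. -/
theorem stmt17 (g : Type*) [LieRing g] [LieAlgebra ℂ g] [Module.Finite ℂ g]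
    [LieAlgebra.IsSemisimple ℂ g]
    (B : LinearMap.BilinForm ℂ g) (hBsymm : B.IsSymm)
    (hBinv : ∀ x y z : g, B ⁅x, y⁆ z = B x ⁅y, z⁆)
    (hBnd : B.Nondegenerate)
    (r : LieSubalgebra ℂ g) (hred : LieAlgebra.IsReductive' ℂ r)
    (hBr : (B.restrict r.toSubmodule).Nondegenerate)
    (p : Submodule ℂ g) (hp : p = B.orthogonal r.toSubmodule)
    (hbr : ∀ (x : r) (y : p), ⁅(x : g), (y : g)⁆ ∈ p)
    (Q : QuadraticForm ℂ p) (hQ : Q = (B.restrict p).toQuadraticMap)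
    (hr : LieSubalgebra ℂ g) (hrr : hr ≤ r)
    -- the extension `B_{C(p)}` of `B_p` to the exterior algebra, given on
    -- decomposable degree-3 elements by the Gram determinant:
    (Bc : LinearMap.BilinForm ℂ (ExteriorAlgebra ℂ p))
    (hBc : ∀ a b c a' b' c' : p,
      Bc (ExteriorAlgebra.ι ℂ a * ExteriorAlgebra.ι ℂ b * ExteriorAlgebra.ι ℂ c)
         (ExteriorAlgebra.ι ℂ a' * ExteriorAlgebra.ι ℂ b' * ExteriorAlgebra.ι ℂ c') =
      Matrix.det !![B (a : g) (a' : g), B (a : g) (b' : g), B (a : g) (c' : g);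
                    B (b : g) (a' : g), B (b : g) (b' : g), B (b : g) (c' : g);
                    B (c : g) (a' : g), B (c : g) (b' : g), B (c : g) (c' : g)])
    -- the cubic element `v ∈ ∧³p`:
    (ve : ExteriorAlgebra ℂ p)
    (hv3 : ve ∈ (LinearMap.range (ExteriorAlgebra.ι ℂ : p →ₗ[ℂ] ExteriorAlgebra ℂ p)) ^ 3)
    (hvdef : ∀ x x' x'' : p,
      B ⁅(x : g), (x' : g)⁆ (x'' : g) = -2 * Bc ve
        (ExteriorAlgebra.ι ℂ x * ExteriorAlgebra.ι ℂ x' * ExteriorAlgebra.ι ℂ x''))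
    (v : CliffordAlgebra Q) (hv : v = (equivExterior Q).symm ve)
    -- the spin homomorphism `ν_*`:
    (ν : r →ₗ[ℂ] CliffordAlgebra Q)
    (hνdef : ∀ (x : r) (y : p), ι Q ⟨⁅(x : g), (y : g)⁆, hbr x y⟩ = ⁅ν x, ι Q y⁆)
    -- `u` and the left ideal `L = C(p)·u`:
    (u : CliffordAlgebra Q) :
    (∀ x : r, (x : g) ∈ hr → v * ν x = ν x * v) ∧
    ∀ (β : Module.Dual ℂ g) (s : CliffordAlgebra Q),
      s ∈ LinearMap.range (LinearMap.mulRight ℂ u) →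
      (∀ x : r, (x : g) ∈ hr → ν x * s = β x • s) →
      v * s ∈ LinearMap.range (LinearMap.mulRight ℂ u) ∧
        ∀ x : r, (x : g) ∈ hr → ν x * (v * s) = β x • (v * s) :=
  stmt17_general g B hBsymm hBinv hBnd r hBr p hp hbr Q hQ hr Bc hBc ve hv3 hvdef v hv ν hνdef u
end
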